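/- arXiv:1705.01351 — 6 statements merged into one kernel-verified Lean document; each statement's English description precedes it below -/
import Mathlib

section
/- Let (Γ, Λ) be a crystallographic group and K a field of characteristic zero. Set V_K := Λ ⊗_ℤ K, on which Γ acts K-linearly via Ad ⊗ id. Then there exists a 1-cocycle u : Γ → V_K (i.e. u(γδ) = u(γ) + γ·u(δ) for all γ, δ ∈ Γ) satisfying u(λ) = λ ⊗ 1 for every λ ∈ Λ. -/
/-- Let `(Γ, Λ)` be a crystallographic group and `K` a field of
characteristic zero.  Here `Λ`, being free abelian of finite rank, is presented via an
injective homomorphism `i : ℤⁿ → Γ` with image the subgroup `Λ`, and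
`V_K := Λ ⊗_ℤ K` is identified with `Kⁿ`, the inclusion `λ ↦ λ ⊗ 1` becoming the
coordinatewise coercion `ℤⁿ → Kⁿ`.  The `K`-linear action of `Γ` on `V_K` via `Ad ⊗ id`
is the homomorphism `ρ` characterized by `γ * i l * γ⁻¹ = i m → ρ γ l = m`.
Then there exists a 1-cocycle `u : Γ → V_K` (i.e. `u (γδ) = u γ + γ • u δ`) with
`u (i λ) = λ ⊗ 1` for every `λ ∈ Λ`. -/
theorem exists_cocycle_extending_identity
    (K : Type*) [Field K] [CharZero K] (n : ℕ)
    (Γ : Type*) [Group Γ] (Λ : Subgroup Γ)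
    (i : (Fin n → ℤ) → Γ)
    (hadd : ∀ l m : Fin n → ℤ, i (l + m) = i l * i m)
    (hinj : Function.Injective i)
    (hrange : ∀ γ : Γ, γ ∈ Λ ↔ ∃ l : Fin n → ℤ, i l = γ)
    (hnormal : Λ.Normal) (hfi : Λ.FiniteIndex)
    (hker : ∀ γ : Γ, (∀ l : Fin n → ℤ, γ * i l * γ⁻¹ = i l) → γ ∈ Λ)
    (ρ : Γ →* ((Fin n → K) ≃ₗ[K] (Fin n → K)))
    (hρ : ∀ (γ : Γ) (l m : Fin n → ℤ), γ * i l * γ⁻¹ = i m →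
      ρ γ (fun j => (l j : K)) = fun j => (m j : K)) :
    ∃ u : Γ → (Fin n → K),
      (∀ γ δ : Γ, u (γ * δ) = u γ + ρ γ (u δ)) ∧
      (∀ l : Fin n → ℤ, u (i l) = fun j => (l j : K)) := by
  classical
  -- the multiplication rule for LinearEquiv automorphisms
  have hmul : ∀ (γ δ : Γ) (v : Fin n → K), ρ (γ * δ) v = ρ γ (ρ δ v) := by
    intro γ δ v
    rw [map_mul]
    rfl
  -- commutativity of the lattice
  have hcomm : ∀ l m : Fin n → ℤ, i l * i m = i m * i l := by
    intro l m; rw [← hadd, ← hadd, add_comm]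
  -- the coordinate map on Λ
  let ιZ : Γ → (Fin n → ℤ) := fun γ => if h : ∃ l, i l = γ then h.choose else 0
  have hιZ_spec : ∀ γ ∈ Λ, i (ιZ γ) = γ := by
    intro γ hγ
    have h := (hrange γ).mp hγ
    simp only [ιZ, dif_pos h]
    exact h.choose_spec
  have hιZ_i : ∀ l, ιZ (i l) = l :=
    fun l => hinj (hιZ_spec _ ((hrange _).mpr ⟨l, rfl⟩))
  have hιZ_add : ∀ a b, a ∈ Λ → b ∈ Λ → ιZ (a * b) = ιZ a + ιZ b := by
    intro a b ha hb
    apply hinj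
    rw [hadd, hιZ_spec a ha, hιZ_spec b hb, hιZ_spec _ (mul_mem ha hb)]
  let ιK : Γ → (Fin n → K) := fun γ => fun j => ((ιZ γ j : ℤ) : K)
  have hιK_add : ∀ a b, a ∈ Λ → b ∈ Λ → ιK (a * b) = ιK a + ιK b := by
    intro a b ha hb
    funext j
    simp [ιK, hιZ_add a b ha hb]
  -- a linear equivalence fixing all integer points is the identity
  have hfixgen : ∀ A : (Fin n → K) ≃ₗ[K] (Fin n → K),
      (∀ l : Fin n → ℤ, A (fun j => (l j : K)) = fun j => (l j : K)) → ∀ v, A v = v := by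
    intro A hA v
    have hsingle : ∀ k : Fin n, A (Pi.single k (1 : K)) = Pi.single k (1 : K) := by
      intro k
      have h1 : (fun j => (((Pi.single k 1 : Fin n → ℤ)) j : K)) = Pi.single k (1 : K) := by
        funext j
        by_cases hj : j = k
        · subst hj; simp
        · simp [Pi.single_apply, hj]
      have := hA (Pi.single k 1)
      rwa [h1] at this
    have hv : v = ∑ k : Fin n, v k • (Pi.single k (1 : K) : Fin n → K) := by
      funext j
      rw [Finset.sum_apply]
      simp [Pi.single_apply]
    rw [hv, map_sum]
    simp only [map_smul, hsingle]
  -- ρ is trivial on Λ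
  have hρΛ : ∀ μ ∈ Λ, ∀ v, ρ μ v = v := by
    intro μ hμ v
    obtain ⟨l, rfl⟩ := (hrange μ).mp hμ
    refine hfixgen _ (fun m => hρ (i l) m m ?_) v
    rw [hcomm l m, mul_assoc, mul_inv_cancel, mul_one]
  -- equivariance of ιK
  have hequiv : ∀ (γ : Γ), ∀ μ ∈ Λ, ρ γ (ιK μ) = ιK (γ * μ * γ⁻¹) := by
    intro γ μ hμ
    have hμ' : γ * μ * γ⁻¹ ∈ Λ := hnormal.conj_mem μ hμ γ
    exact hρ γ _ _ (by rw [hιZ_spec μ hμ, hιZ_spec _ hμ'])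
  -- the quotient is finite
  have hfin : Finite (Γ ⧸ Λ) := Subgroup.finite_quotient_of_finiteIndex
  have : Fintype (Γ ⧸ Λ) := Fintype.ofFinite _
  -- section of the quotient map
  let sec : Γ ⧸ Λ → Γ := Quotient.out
  have hsec : ∀ x : Γ ⧸ Λ, (QuotientGroup.mk (sec x) : Γ ⧸ Λ) = x :=
    fun x => QuotientGroup.out_eq' x
  let r : Γ → Γ := fun γ => sec (QuotientGroup.mk γ)
  have hr_mem : ∀ γ, (r γ)⁻¹ * γ ∈ Λ := by
    intro γ
    exact QuotientGroup.eq.mp (hsec (QuotientGroup.mk γ))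
  -- the basic non-equivariant cochain
  let f : Γ → (Fin n → K) := fun γ => ρ γ (ιK ((r γ)⁻¹ * γ))
  have hf : ∀ γ, ∀ μ ∈ Λ, f (γ * μ) = f γ + ρ γ (ιK μ) := by
    intro γ μ hμ
    have hr : r (γ * μ) = r γ := by
      simp only [r, QuotientGroup.mk_mul_of_mem γ hμ]
    have h1 : (r (γ * μ))⁻¹ * (γ * μ) = ((r γ)⁻¹ * γ) * μ := by
      rw [hr, mul_assoc]
    show ρ (γ * μ) (ιK ((r (γ * μ))⁻¹ * (γ * μ))) = _
    rw [h1, hιK_add _ _ (hr_mem γ) hμ, hmul, hρΛ μ hμ, map_add]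
  -- the "difference" function and its Λ-invariance
  have hg : ∀ (γ a : Γ), ∀ μ ∈ Λ,
      f (γ * (a * μ)) - ρ γ (f (a * μ)) = f (γ * a) - ρ γ (f a) := by
    intro γ a μ hμ
    rw [← mul_assoc, hf (γ * a) μ hμ, hf a μ hμ, map_add, hmul]
    abel
  -- summing over the quotient is invariant under left translation
  have hsum : ∀ γ δ : Γ,
      ∑ x : Γ ⧸ Λ, (f (γ * (δ * sec x)) - ρ γ (f (δ * sec x)))
        = ∑ x : Γ ⧸ Λ, (f (γ * sec x) - ρ γ (f (sec x))) := by
    intro γ δ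
    have key : ∀ x : Γ ⧸ Λ,
        f (γ * (δ * sec x)) - ρ γ (f (δ * sec x))
          = f (γ * sec (δ • x)) - ρ γ (f (sec (δ • x))) := by
      intro x
      have hmem : (sec (δ • x))⁻¹ * (δ * sec x) ∈ Λ := by
        apply QuotientGroup.eq.mp
        rw [hsec (δ • x)]
        have : (QuotientGroup.mk (δ * sec x) : Γ ⧸ Λ) = δ • x := by
          rw [← smul_eq_mul, MulAction.Quotient.mk_smul_out]
        rw [this]
      have hdecomp : δ * sec x = sec (δ • x) * ((sec (δ • x))⁻¹ * (δ * sec x)) := by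
        group
      rw [hdecomp]
      exact hg γ (sec (δ • x)) _ hmem
    calc ∑ x : Γ ⧸ Λ, (f (γ * (δ * sec x)) - ρ γ (f (δ * sec x)))
        = ∑ x : Γ ⧸ Λ, (f (γ * sec (δ • x)) - ρ γ (f (sec (δ • x)))) :=
          Finset.sum_congr rfl (fun x _ => key x)
      _ = ∑ x : Γ ⧸ Λ, (f (γ * sec x) - ρ γ (f (sec x))) := by
          exact Fintype.sum_bijective (δ • ·) (MulAction.bijective δ) _ _ (fun x => rfl)
  -- the cocycle
  set N : K := (Λ.index : K) with hN
  have hNne : N ≠ 0 := Nat.cast_ne_zero.mpr hfi.index_ne_zero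
  refine ⟨fun γ => N⁻¹ • ∑ x : Γ ⧸ Λ, (f (γ * sec x) - ρ γ (f (sec x))), ?_, ?_⟩
  · intro γ δ
    have hργ : ρ γ (N⁻¹ • ∑ x : Γ ⧸ Λ, (f (δ * sec x) - ρ δ (f (sec x))))
        = N⁻¹ • ∑ x : Γ ⧸ Λ, (ρ γ (f (δ * sec x)) - ρ γ (ρ δ (f (sec x)))) := by
      rw [map_smul, map_sum]
      simp only [map_sub]
    show N⁻¹ • ∑ x : Γ ⧸ Λ, (f (γ * δ * sec x) - ρ (γ * δ) (f (sec x)))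
        = N⁻¹ • ∑ x : Γ ⧸ Λ, (f (γ * sec x) - ρ γ (f (sec x)))
          + ρ γ (N⁻¹ • ∑ x : Γ ⧸ Λ, (f (δ * sec x) - ρ δ (f (sec x))))
    rw [hργ, ← smul_add, ← Finset.sum_add_distrib]
    refine congrArg (fun w => N⁻¹ • w) ?_
    calc ∑ x : Γ ⧸ Λ, (f (γ * δ * sec x) - ρ (γ * δ) (f (sec x)))
        = ∑ x : Γ ⧸ Λ, ((f (γ * (δ * sec x)) - ρ γ (f (δ * sec x)))
            + (ρ γ (f (δ * sec x)) - ρ γ (ρ δ (f (sec x))))) := by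
          refine Finset.sum_congr rfl fun x _ => ?_
          rw [mul_assoc, hmul]
          abel
      _ = ∑ x : Γ ⧸ Λ, (f (γ * (δ * sec x)) - ρ γ (f (δ * sec x)))
            + ∑ x : Γ ⧸ Λ, (ρ γ (f (δ * sec x)) - ρ γ (ρ δ (f (sec x)))) :=
          Finset.sum_add_distrib
      _ = ∑ x : Γ ⧸ Λ, (f (γ * sec x) - ρ γ (f (sec x)))
            + ∑ x : Γ ⧸ Λ, (ρ γ (f (δ * sec x)) - ρ γ (ρ δ (f (sec x)))) := by
          rw [hsum]
      _ = ∑ x : Γ ⧸ Λ, ((f (γ * sec x) - ρ γ (f (sec x)))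
            + (ρ γ (f (δ * sec x)) - ρ γ (ρ δ (f (sec x))))) :=
          Finset.sum_add_distrib.symm
  · intro l
    show N⁻¹ • ∑ x : Γ ⧸ Λ, (f (i l * sec x) - ρ (i l) (f (sec x))) = fun j => (l j : K)
    have key : ∀ x : Γ ⧸ Λ,
        f (i l * sec x) - ρ (i l) (f (sec x)) = fun j => (l j : K) := by
      intro x
      have hρil : ρ (i l) (f (sec x)) = f (sec x) :=
        hρΛ (i l) ((hrange _).mpr ⟨l, rfl⟩) _
      have hmem : (sec x)⁻¹ * i l * sec x ∈ Λ := by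
        have := hnormal.conj_mem (i l) ((hrange _).mpr ⟨l, rfl⟩) (sec x)⁻¹
        simpa using this
      have hdecomp : i l * sec x = sec x * ((sec x)⁻¹ * i l * sec x) := by group
      rw [hρil, hdecomp, hf (sec x) _ hmem, hequiv (sec x) _ hmem]
      have : sec x * ((sec x)⁻¹ * i l * sec x) * (sec x)⁻¹ = i l := by group
      rw [this]
      funext j
      simp [ιK, hιZ_i l]
    rw [Finset.sum_congr rfl (fun x _ => key x), Finset.sum_const]
    have hcard : (Finset.univ : Finset (Γ ⧸ Λ)).card = Λ.index := by
      rw [Subgroup.index_eq_card, Nat.card_eq_fintype_card, Finset.card_univ]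
    rw [hcard, ← Nat.cast_smul_eq_nsmul K, smul_smul, hN]
    rw [inv_mul_cancel₀ hNne, one_smul]
end

section
/- Let (Γ, Λ) be a crystallographic group, K a field of characteristic zero, and V_K := Λ ⊗_ℤ K with Γ acting via Ad ⊗ id. If u and u' are two 1-cocycles Γ → V_K both satisfying u(λ) = u'(λ) = λ ⊗ 1 for every λ ∈ Λ, then they are cohomologous: there exists w ∈ V_K such that u'(γ) − u(γ) = γ·w − w for every γ ∈ Γ. -/
/-- Let `(Γ, Λ)` be a crystallographic group, `K` a field of
characteristic zero, and `V_K := Λ ⊗_ℤ K` (identified with `Kⁿ`, with `Λ` presented as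
`ℤⁿ` via `i` and the inclusion `λ ↦ λ ⊗ 1` being coordinatewise coercion), on which `Γ`
acts via `Ad ⊗ id` through the homomorphism `ρ`.  If `u` and `u'` are two 1-cocycles
`Γ → V_K` both restricting to `λ ↦ λ ⊗ 1` on `Λ`, then they are cohomologous:
there is `w ∈ V_K` with `u' γ − u γ = γ • w − w` for all `γ ∈ Γ`. -/
theorem cocycles_extending_identity_are_cohomologous
    (K : Type*) [Field K] [CharZero K] (n : ℕ)
    (Γ : Type*) [Group Γ] (Λ : Subgroup Γ)
    (i : (Fin n → ℤ) → Γ)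
    (hadd : ∀ l m : Fin n → ℤ, i (l + m) = i l * i m)
    (hinj : Function.Injective i)
    (hrange : ∀ γ : Γ, γ ∈ Λ ↔ ∃ l : Fin n → ℤ, i l = γ)
    (hnormal : Λ.Normal) (hfi : Λ.FiniteIndex)
    (hker : ∀ γ : Γ, (∀ l : Fin n → ℤ, γ * i l * γ⁻¹ = i l) → γ ∈ Λ)
    (ρ : Γ →* ((Fin n → K) ≃ₗ[K] (Fin n → K)))
    (hρ : ∀ (γ : Γ) (l m : Fin n → ℤ), γ * i l * γ⁻¹ = i m →
      ρ γ (fun j => (l j : K)) = fun j => (m j : K))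
    (u u' : Γ → (Fin n → K))
    (hu : ∀ γ δ : Γ, u (γ * δ) = u γ + ρ γ (u δ))
    (hu' : ∀ γ δ : Γ, u' (γ * δ) = u' γ + ρ γ (u' δ))
    (hures : ∀ l : Fin n → ℤ, u (i l) = fun j => (l j : K))
    (hu'res : ∀ l : Fin n → ℤ, u' (i l) = fun j => (l j : K)) :
    ∃ w : Fin n → K, ∀ γ : Γ, u' γ - u γ = ρ γ w - w := by
  classical
  set d : Γ → (Fin n → K) := fun γ => u' γ - u γ with hd_def
  have hd : ∀ γ δ : Γ, d (γ * δ) = d γ + ρ γ (d δ) := by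
    intro γ δ
    simp only [hd_def, hu, hu', map_sub]
    abel
  have hdΛ : ∀ γ ∈ Λ, d γ = 0 := by
    intro γ hγ
    obtain ⟨l, rfl⟩ := (hrange γ).1 hγ
    simp [hd_def, hures, hu'res]
  have hconst : ∀ a b : Γ, a⁻¹ * b ∈ Λ → d a = d b := by
    intro a b hab
    have : b = a * (a⁻¹ * b) := by group
    rw [this, hd a (a⁻¹ * b), hdΛ _ hab]
    simp
  -- descend d to the finite quotient
  let f : Γ ⧸ Λ → (Fin n → K) :=
    Quotient.lift d (fun a b h => hconst a b ((QuotientGroup.leftRel_apply).1 h))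
  have hf : ∀ γ : Γ, f (γ : Γ ⧸ Λ) = d γ := fun γ => rfl
  haveI : Finite (Γ ⧸ Λ) := Λ.finite_quotient_of_finiteIndex
  haveI : Fintype (Γ ⧸ Λ) := Fintype.ofFinite _
  set N : ℕ := Fintype.card (Γ ⧸ Λ) with hN
  set S : Fin n → K := ∑ q : Γ ⧸ Λ, f q with hS
  have hkey : ∀ (γ : Γ) (q : Γ ⧸ Λ), f ((γ : Γ ⧸ Λ) * q) = d γ + ρ γ (f q) := by
    intro γ q
    induction q using QuotientGroup.induction_on with
    | H δ => rw [← QuotientGroup.mk_mul, hf, hf, hd]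
  have hsum : ∀ γ : Γ, S = (N : K) • d γ + ρ γ S := by
    intro γ
    have hmap : (ρ γ) S = ∑ q : Γ ⧸ Λ, ρ γ (f q) := map_sum (ρ γ) f Finset.univ
    calc S = ∑ q : Γ ⧸ Λ, f ((γ : Γ ⧸ Λ) * q) :=
          (Equiv.sum_comp (Equiv.mulLeft (γ : Γ ⧸ Λ)) f).symm
      _ = ∑ q : Γ ⧸ Λ, (d γ + ρ γ (f q)) := Finset.sum_congr rfl fun q _ => hkey γ q
      _ = (N : K) • d γ + ρ γ S := by
          rw [Finset.sum_add_distrib, Finset.sum_const, Finset.card_univ, hmap,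
            Nat.cast_smul_eq_nsmul]
  have hNne : (N : K) ≠ 0 := by
    have : 0 < N := Fintype.card_pos
    exact_mod_cast Nat.cast_ne_zero.2 this.ne'
  refine ⟨-((N : K)⁻¹ • S), fun γ => ?_⟩
  have h2 : (N : K) • d γ = S - ρ γ S := by
    rw [eq_sub_iff_add_eq]; exact (hsum γ).symm
  have h3 : d γ = (N : K)⁻¹ • (S - ρ γ S) := by
    rw [← h2, smul_smul, inv_mul_cancel₀ hNne, one_smul]
  show d γ = _
  rw [h3]
  simp only [map_neg, map_smul, smul_sub]
  abel
end

section
/- Let (Γ, Λ) be a crystallographic group, K a field of characteristic zero, and V_K := Λ ⊗_ℤ K with Γ acting via Ad ⊗ id. Let u : Γ → V_K be a 1-cocycle with u(λ) = λ ⊗ 1 for every λ ∈ Λ. Then the map ρ sending γ ∈ Γ to the affine transformation v ↦ γ·v + u(γ) of V_K is an injective group homomorphism from Γ to the group of affine automorphisms of V_K, and for λ ∈ Λ the map ρ(λ) is the translation v ↦ v + λ ⊗ 1. -/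
/-- Let `(Γ, Λ)` be a crystallographic group, `K` a field of
characteristic zero, and `V_K := Λ ⊗_ℤ K` (identified with `Kⁿ`, with `Λ` presented as
`ℤⁿ` via `i` and `λ ↦ λ ⊗ 1` being the coordinatewise coercion), on which `Γ` acts via
`Ad ⊗ id` through `ρ`.  Let `u : Γ → V_K` be a 1-cocycle with `u (i λ) = λ ⊗ 1` for all
`λ ∈ Λ`.  Then the map sending `γ ∈ Γ` to the affine transformation `v ↦ γ • v + u γ`
of `V_K` is an injective group homomorphism from `Γ` to the group of affine
automorphisms of `V_K`, and for `λ ∈ Λ` the corresponding map is the translation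
`v ↦ v + λ ⊗ 1`. -/
theorem affine_realization_is_injective_homomorphism
    (K : Type*) [Field K] [CharZero K] (n : ℕ)
    (Γ : Type*) [Group Γ] (Λ : Subgroup Γ)
    (i : (Fin n → ℤ) → Γ)
    (hadd : ∀ l m : Fin n → ℤ, i (l + m) = i l * i m)
    (hinj : Function.Injective i)
    (hrange : ∀ γ : Γ, γ ∈ Λ ↔ ∃ l : Fin n → ℤ, i l = γ)
    (hnormal : Λ.Normal) (hfi : Λ.FiniteIndex)
    (hker : ∀ γ : Γ, (∀ l : Fin n → ℤ, γ * i l * γ⁻¹ = i l) → γ ∈ Λ)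
    (ρ : Γ →* ((Fin n → K) ≃ₗ[K] (Fin n → K)))
    (hρ : ∀ (γ : Γ) (l m : Fin n → ℤ), γ * i l * γ⁻¹ = i m →
      ρ γ (fun j => (l j : K)) = fun j => (m j : K))
    (u : Γ → (Fin n → K))
    (hu : ∀ γ δ : Γ, u (γ * δ) = u γ + ρ γ (u δ))
    (hures : ∀ l : Fin n → ℤ, u (i l) = fun j => (l j : K)) :
    ∃ R : Γ →* ((Fin n → K) ≃ᵃ[K] (Fin n → K)),
      (∀ (γ : Γ) (v : Fin n → K), R γ v = ρ γ v + u γ) ∧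
      Function.Injective R ∧
      (∀ (l : Fin n → ℤ) (v : Fin n → K), R (i l) v = v + (fun j => (l j : K))) := by
  -- basic facts
  have hone : i 0 = 1 := by
    have h := hadd 0 0
    simp only [add_zero] at h
    exact (mul_eq_right.mp h.symm)
  -- ρ (i l) fixes integer vectors
  have hfix : ∀ l m : Fin n → ℤ, ρ (i l) (fun j => (m j : K)) = fun j => (m j : K) := by
    intro l m
    apply hρ
    rw [mul_inv_eq_iff_eq_mul, ← hadd, ← hadd, add_comm]
  -- hence ρ (i l) = id
  have hid : ∀ (l : Fin n → ℤ) (v : Fin n → K), ρ (i l) v = v := by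
    intro l v
    have key : ((ρ (i l)) : (Fin n → K) →ₗ[K] (Fin n → K)) = LinearMap.id := by
      apply (Pi.basisFun K (Fin n)).ext
      intro j
      have h1 : (fun k => (((Pi.single j 1 : Fin n → ℤ)) k : K)) = Pi.single j (1 : K) := by
        funext k
        simp [Pi.single_apply, apply_ite]
      have := hfix l (Pi.single j 1)
      rw [h1] at this
      simpa using this
    exact LinearMap.congr_fun key v
  refine ⟨MonoidHom.mk' (fun γ => ((ρ γ).toAffineEquiv).trans
      (AffineEquiv.constVAdd K (Fin n → K) (u γ))) ?_, ?_, ?_, ?_⟩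
  · intro γ δ
    ext v
    simp only [AffineEquiv.trans_apply, LinearEquiv.coe_toAffineEquiv,
      AffineEquiv.constVAdd_apply, AffineEquiv.coe_mul, Function.comp_apply, map_mul,
      hu, map_add, vadd_eq_add]
    have h : (ρ γ * ρ δ) v = ρ γ (ρ δ v) := rfl
    rw [h]
    simp [add_assoc]
  · intro γ v
    simp only [MonoidHom.mk'_apply, AffineEquiv.trans_apply, LinearEquiv.coe_toAffineEquiv,
      AffineEquiv.constVAdd_apply, vadd_eq_add]
    abel
  · rw [injective_iff_map_eq_one]
    intro γ hγ
    have happ : ∀ v : Fin n → K, u γ + ρ γ v = v := by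
      intro v
      have := DFunLike.congr_fun hγ v
      simpa [AffineEquiv.trans_apply] using this
    have hu0 : u γ = 0 := by
      have := happ 0
      simpa using this
    have hρid : ∀ v : Fin n → K, ρ γ v = v := by
      intro v
      have := happ v
      rw [hu0, zero_add] at this
      exact this
    have hmem : γ ∈ Λ := by
      apply hker
      intro l
      have hc : γ * i l * γ⁻¹ ∈ Λ := hnormal.conj_mem _ ((hrange _).mpr ⟨l, rfl⟩) _
      obtain ⟨m, hm⟩ := (hrange _).mp hc
      have h1 := hρ γ l m hm.symm
      rw [hρid] at h1
      have hlm : l = m := by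
        funext j
        exact_mod_cast congrFun h1 j
      rw [← hm, hlm]
    obtain ⟨l, hl⟩ := (hrange _).mp hmem
    have h2 : u γ = fun j => (l j : K) := by rw [← hl]; exact hures l
    have h3 : l = 0 := by
      funext j
      rw [h2] at hu0
      have := congrFun hu0 j
      simp only [Pi.zero_apply] at this
      exact_mod_cast this
    rw [← hl, h3, hone]
  · intro l v
    simp only [MonoidHom.mk'_apply, AffineEquiv.trans_apply, LinearEquiv.coe_toAffineEquiv,
      AffineEquiv.constVAdd_apply, vadd_eq_add, hid, hures]
    abel
end

section
/- Let V be a vector space over a field of characteristic zero and Γ' a subgroup of the group of affine automorphisms of V. Suppose the set N of translations contained in Γ' is the set {t_λ : λ ∈ Λ'} for a subgroup Λ' of (V,+), and that N has finite index in Γ'. Then N admits a complement in Γ' (i.e. there is a subgroup H ≤ Γ' with H ∩ N = {1} and H·N = Γ', equivalently the extension 1 → Λ' → Γ' → G → 1 splits, where G is the image of Γ' under the linear-part homomorphism) if and only if there exists w ∈ V such that γ(w) − w ∈ Λ' for every γ ∈ Γ'. -/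
section Aux

variable {K : Type*} [Field K] {V : Type*} [AddCommGroup V] [Module K V]

private lemma aux_apply_eq (f : V ≃ᵃ[K] V) (x : V) : f x = f.linear x + f 0 := by
  have := f.map_vadd 0 x
  simpa using this

private lemma aux_eq_constVAdd (f : V ≃ᵃ[K] V) (hf : f.linear = LinearEquiv.refl K V) :
    f = AffineEquiv.constVAdd K V (f 0) := by
  ext x
  have := aux_apply_eq f x
  simp [hf] at this
  simpa [this] using add_comm x (f 0)

private lemma aux_conj_constVAdd (g : V ≃ᵃ[K] V) (v : V) :
    g * AffineEquiv.constVAdd K V v * g⁻¹ = AffineEquiv.constVAdd K V (g.linear v) := by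
  ext x
  show g (v +ᵥ g.symm x) = g.linear v + x
  rw [g.map_vadd (g.symm x) v]
  have : g (g.symm x) = x := g.apply_symm_apply x
  simp [vadd_eq_add, this]

end Aux

/-- Let `V` be a vector space over a field of characteristic zero and
`Γ'` a subgroup of the group of affine automorphisms of `V`.  Suppose the translations
contained in `Γ'` are exactly those by vectors of a subgroup `Λ'` of `(V,+)`, and that
the subgroup `N` of translations in `Γ'` has finite index in `Γ'`.  Then `N` admits a
complement in `Γ'` (equivalently, the extension `0 → Λ' → Γ' → G → 1` splits, `G` being
the image of `Γ'` under the linear-part homomorphism) if and only if there exists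
`w ∈ V` with `γ w − w ∈ Λ'` for every `γ ∈ Γ'`. -/
theorem splits_iff_fixed_point_mod_lattice
    (K : Type*) [Field K] [CharZero K]
    (V : Type*) [AddCommGroup V] [Module K V]
    (Γ' : Subgroup (V ≃ᵃ[K] V)) (Λ' : AddSubgroup V)
    (htrans : ∀ v : V, AffineEquiv.constVAdd K V v ∈ Γ' ↔ v ∈ Λ')
    (N : Subgroup ↥Γ')
    (hN : N = MonoidHom.ker (AffineEquiv.linearHom.comp Γ'.subtype))
    (hfi : N.FiniteIndex) :
    (∃ H : Subgroup ↥Γ', H ⊓ N = ⊥ ∧ ∀ γ : ↥Γ', ∃ h ∈ H, ∃ t ∈ N, γ = h * t) ↔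
      ∃ w : V, ∀ γ ∈ Γ', γ w - w ∈ Λ' := by
  -- characterization of membership in N
  have hmemN : ∀ t : ↥Γ', t ∈ N ↔ (t : V ≃ᵃ[K] V).linear = LinearEquiv.refl K V := by
    intro t
    rw [hN, MonoidHom.mem_ker]
    rfl
  constructor
  · rintro ⟨H, hHN, hsplit⟩
    -- H is finite since it injects into the finite quotient Γ'/N
    haveI : Finite (↥Γ' ⧸ N) := @Subgroup.finite_quotient_of_finiteIndex _ _ _ hfi
    have hinj : Function.Injective
        (fun h : ↥H => (QuotientGroup.mk (h : ↥Γ') : ↥Γ' ⧸ N)) := by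
      intro a b hab
      have hmem : ((a : ↥Γ'))⁻¹ * (b : ↥Γ') ∈ N := (QuotientGroup.eq).mp hab
      have hmem2 : ((a : ↥Γ'))⁻¹ * (b : ↥Γ') ∈ H := H.mul_mem (H.inv_mem a.2) b.2
      have : ((a : ↥Γ'))⁻¹ * (b : ↥Γ') ∈ H ⊓ N := ⟨hmem2, hmem⟩
      rw [hHN, Subgroup.mem_bot] at this
      have : (a : ↥Γ') = (b : ↥Γ') := inv_mul_eq_one.mp this
      exact Subtype.ext this
    haveI : Finite ↥H := Finite.of_injective _ hinj
    haveI : Fintype ↥H := Fintype.ofFinite _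
    set n : ℕ := Fintype.card ↥H with hn
    have hn0 : (n : K) ≠ 0 := Nat.cast_ne_zero.mpr Fintype.card_ne_zero
    set S : V := ∑ h : ↥H, (((h : ↥Γ') : V ≃ᵃ[K] V)) 0 with hS
    set w : V := (n : K)⁻¹ • S with hw
    -- every element of H fixes w
    have hfix : ∀ h : ↥H, (((h : ↥Γ') : V ≃ᵃ[K] V)) w = w := by
      intro h
      set f : V ≃ᵃ[K] V := ((h : ↥Γ') : V ≃ᵃ[K] V) with hf
      have hsum : (∑ h' : ↥H, f.linear ((((h' : ↥Γ') : V ≃ᵃ[K] V)) 0)) + n • f 0 = S := by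
        have h1 : (∑ h' : ↥H, f.linear ((((h' : ↥Γ') : V ≃ᵃ[K] V)) 0)) + n • f 0
            = ∑ h' : ↥H, (f.linear ((((h' : ↥Γ') : V ≃ᵃ[K] V)) 0) + f 0) := by
          rw [Finset.sum_add_distrib, Finset.sum_const]
          simp [hn]
        have h2 : ∀ h' : ↥H, f.linear ((((h' : ↥Γ') : V ≃ᵃ[K] V)) 0) + f 0
            = (((((h * h' : ↥H) : ↥Γ')) : V ≃ᵃ[K] V)) 0 := by
          intro h'
          have : (((((h * h' : ↥H) : ↥Γ')) : V ≃ᵃ[K] V)) 0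
              = f ((((h' : ↥Γ') : V ≃ᵃ[K] V)) 0) := rfl
          rw [this]
          exact (aux_apply_eq f _).symm
        have h3 : (∑ h' : ↥H, (((((h * h' : ↥H) : ↥Γ')) : V ≃ᵃ[K] V)) 0) = S := by
          rw [hS]
          exact Fintype.sum_equiv (Equiv.mulLeft h) _ _ (fun h' => rfl)
        rw [h1]
        rw [Finset.sum_congr rfl (fun h' _ => h2 h'), h3]
      have hlinS : f.linear S = S - n • f 0 := by
        have : f.linear S = ∑ h' : ↥H, f.linear ((((h' : ↥Γ') : V ≃ᵃ[K] V)) 0) := by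
          rw [hS]; exact map_sum f.linear _ _
        rw [this]
        exact eq_sub_of_add_eq hsum
      have hcast : (n : K)⁻¹ • ((n : ℕ) • f 0) = f 0 := by
        rw [← Nat.cast_smul_eq_nsmul K n (f 0), smul_smul, inv_mul_cancel₀ hn0, one_smul]
      calc f w = f.linear w + f 0 := aux_apply_eq f w
        _ = (n : K)⁻¹ • f.linear S + f 0 := by rw [hw, map_smul]
        _ = (n : K)⁻¹ • (S - n • f 0) + f 0 := by rw [hlinS]
        _ = (n : K)⁻¹ • S - (n : K)⁻¹ • ((n : ℕ) • f 0) + f 0 := by rw [smul_sub]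
        _ = w := by rw [hcast, hw]; abel
    refine ⟨w, ?_⟩
    intro γ hγ
    obtain ⟨h, hh, t, ht, heq⟩ := hsplit ⟨γ, hγ⟩
    set tc : V ≃ᵃ[K] V := (t : V ≃ᵃ[K] V) with htc
    have htlin : tc.linear = LinearEquiv.refl K V := (hmemN t).mp ht
    have htconst : tc = AffineEquiv.constVAdd K V (tc 0) := aux_eq_constVAdd tc htlin
    have hlamm : tc 0 ∈ Λ' := by
      rw [← htrans, ← htconst]
      exact t.2
    set hc : V ≃ᵃ[K] V := (h : V ≃ᵃ[K] V) with hhc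
    have hγeq : γ = hc * tc := congrArg (fun x : ↥Γ' => (x : V ≃ᵃ[K] V)) heq
    have hcw : hc w = w := hfix ⟨h, hh⟩
    have hγw : γ w = hc.linear (tc 0) + w := by
      rw [hγeq]
      show hc (tc w) = hc.linear (tc 0) + w
      have : tc w = tc 0 +ᵥ w := by
        nth_rewrite 1 [htconst]
        rfl
      rw [this, hc.map_vadd w (tc 0), hcw]
      rfl
    have : γ w - w = hc.linear (tc 0) := by rw [hγw]; abel
    rw [this]
    -- hc.linear (tc 0) ∈ Λ' because conjugation of a translation stays in Γ'
    rw [← htrans, ← aux_conj_constVAdd hc (tc 0)]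
    exact Γ'.mul_mem (Γ'.mul_mem h.2 ((htrans _).mpr hlamm)) (Γ'.inv_mem h.2)
  · rintro ⟨w, hw⟩
    refine ⟨{ carrier := {γ : ↥Γ' | (γ : V ≃ᵃ[K] V) w = w},
              one_mem' := rfl,
              mul_mem' := ?_,
              inv_mem' := ?_ }, ?_, ?_⟩
    · intro a b ha hb
      show (a : V ≃ᵃ[K] V) ((b : V ≃ᵃ[K] V) w) = w
      rw [hb, ha]
    · intro a ha
      show ((a : V ≃ᵃ[K] V)).symm w = w
      conv_lhs => rw [← ha]
      exact (a : V ≃ᵃ[K] V).symm_apply_apply w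
    · -- trivial intersection
      rw [eq_bot_iff]
      intro x ⟨hxH, hxN⟩
      have hxlin : (x : V ≃ᵃ[K] V).linear = LinearEquiv.refl K V := (hmemN x).mp hxN
      have hxconst := aux_eq_constVAdd (x : V ≃ᵃ[K] V) hxlin
      have hxw : (x : V ≃ᵃ[K] V) w = w := hxH
      have h0 : (x : V ≃ᵃ[K] V) 0 = 0 := by
        have : (x : V ≃ᵃ[K] V) w = (x : V ≃ᵃ[K] V) 0 + w := by
          conv_lhs => rw [hxconst]
          rfl
        rw [hxw] at this
        have := this.symm
        simpa using this
      have : (x : V ≃ᵃ[K] V) = 1 := by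
        rw [hxconst, h0, AffineEquiv.constVAdd_zero]
        rfl
      rw [Subgroup.mem_bot]
      exact Subtype.ext this
    · -- decomposition
      intro γ
      have hlamm : (γ : V ≃ᵃ[K] V) w - w ∈ Λ' := hw _ γ.2
      set lam : V := (γ : V ≃ᵃ[K] V) w - w with hlam
      have htΓ : AffineEquiv.constVAdd K V lam ∈ Γ' := (htrans lam).mpr hlamm
      set t' : ↥Γ' := ⟨AffineEquiv.constVAdd K V lam, htΓ⟩ with ht'
      set h : ↥Γ' := t'⁻¹ * γ with hh
      have hhH : (h : V ≃ᵃ[K] V) w = w := by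
        show (AffineEquiv.constVAdd K V lam).symm ((γ : V ≃ᵃ[K] V) w) = w
        rw [AffineEquiv.constVAdd_symm]
        show -lam + (γ : V ≃ᵃ[K] V) w = w
        rw [hlam]
        abel
      have ht'N : t' ∈ N := by
        rw [hmemN]
        rfl
      haveI : N.Normal := by
        rw [hN]
        exact MonoidHom.normal_ker _
      refine ⟨h, hhH, h⁻¹ * t' * h, ?_, ?_⟩
      · have := ‹N.Normal›.conj_mem t' ht'N h⁻¹
        simpa using this
      · rw [hh]
        group
end

section
/- Let V be a vector space over a field of characteristic zero and Γ' a subgroup of the group of affine automorphisms of V. Suppose the set of translations contained in Γ' is {t_λ : λ ∈ Λ'} for a subgroup Λ' of (V,+), and that this set has finite index in Γ'. Then Γ' is torsion free (its only element of finite order is the identity) if and only if for every γ ∈ Γ' which is not a translation and for every v ∈ V one has γ(v) − v ∉ Λ'. -/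
private theorem affeq_apply (K V : Type*) [Field K] [AddCommGroup V] [Module K V]
    (f : V ≃ᵃ[K] V) (x : V) : f x = f.linear x + f 0 := by
  have := f.map_vadd 0 x
  simpa using this

private theorem affeq_eq_one (K V : Type*) [Field K] [AddCommGroup V] [Module K V]
    (f : V ≃ᵃ[K] V) (hlin : f.linear = LinearEquiv.refl K V) (v : V) (hv : f v = v) :
    f = 1 := by
  apply AffineEquiv.ext
  intro x
  have := f.map_vadd v (x - v)
  rw [hlin] at this
  simpa [hv, sub_add_cancel] using this

private theorem fix_pow (K V : Type*) [Field K] [AddCommGroup V] [Module K V]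
    (f : V ≃ᵃ[K] V) (v : V) (hv : f v = v) (n : ℕ) : (f ^ n) v = v := by
  induction n with
  | zero => simp [AffineEquiv.one_def]
  | succ n ih =>
    rw [pow_succ']
    simp only [AffineEquiv.coe_mul, Function.comp_apply, ih, hv]

/-- Let `V` be a vector space over a field of characteristic zero and
`Γ'` a subgroup of the affine automorphism group of `V`.  Suppose the translations
contained in `Γ'` are exactly those by vectors of a subgroup `Λ'` of `(V,+)`, and that
the subgroup of translations in `Γ'` has finite index in `Γ'`.  Then `Γ'` is torsion
free if and only if for every `γ ∈ Γ'` which is not a translation and every `v ∈ V` one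
has `γ v − v ∉ Λ'`. -/
theorem torsionFree_iff_no_quasi_fixed_point
    (K : Type*) [Field K] [CharZero K]
    (V : Type*) [AddCommGroup V] [Module K V]
    (Γ' : Subgroup (V ≃ᵃ[K] V)) (Λ' : AddSubgroup V)
    (htrans : ∀ v : V, AffineEquiv.constVAdd K V v ∈ Γ' ↔ v ∈ Λ')
    (N : Subgroup ↥Γ')
    (hN : N = MonoidHom.ker (AffineEquiv.linearHom.comp Γ'.subtype))
    (hfi : N.FiniteIndex) :
    (∀ (γ : ↥Γ') (m : ℕ), 0 < m → γ ^ m = 1 → γ = 1) ↔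
      (∀ γ ∈ Γ', ¬ (∃ b : V, γ = AffineEquiv.constVAdd K V b) →
        ∀ v : V, γ v - v ∉ Λ') := by
  constructor
  · -- torsion-free → no quasi-fixed point
    intro h γ hγ hnt v hv
    set lam := γ v - v with hlam
    have ht : AffineEquiv.constVAdd K V (-lam) ∈ Γ' := (htrans _).mpr (neg_mem hv)
    set δ' : V ≃ᵃ[K] V := AffineEquiv.constVAdd K V (-lam) * γ with hδ'def
    have hδ'mem : δ' ∈ Γ' := mul_mem ht hγ
    set δ : ↥Γ' := ⟨δ', hδ'mem⟩ with hδdef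
    have hfix : δ' v = v := by
      show -lam +ᵥ γ v = v
      simp [hlam, vadd_eq_add]
    have hNnormal : N.Normal := by rw [hN]; exact MonoidHom.normal_ker _
    set k := N.index with hk
    have hkpos : 0 < k := Nat.pos_of_ne_zero hfi.index_ne_zero
    have hmem : δ ^ k ∈ N := Subgroup.pow_index_mem N δ
    rw [hN, MonoidHom.mem_ker] at hmem
    have hcoe : ((δ ^ k : ↥Γ') : V ≃ᵃ[K] V) = δ' ^ k := by
      simp [hδdef]
    have hlin : (δ' ^ k).linear = LinearEquiv.refl K V := by
      have : AffineEquiv.linearHom ((δ ^ k : ↥Γ') : V ≃ᵃ[K] V) = 1 := hmem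
      rw [hcoe] at this
      exact this
    have hone : δ' ^ k = 1 :=
      affeq_eq_one K V _ hlin v (fix_pow K V δ' v hfix k)
    have hδone : δ = 1 := by
      apply h δ k hkpos
      apply Subtype.ext
      rw [hcoe, hone]
      rfl
    have : γ = AffineEquiv.constVAdd K V lam := by
      have h1 : δ' = 1 := by
        have := congrArg (Subtype.val) hδone
        exact this
      have : AffineEquiv.constVAdd K V (-lam) * γ = 1 := h1
      have hmul : AffineEquiv.constVAdd K V lam * AffineEquiv.constVAdd K V (-lam) = 1 := by
        rw [AffineEquiv.mul_def, ← AffineEquiv.constVAdd_add, add_neg_cancel]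
        simp [AffineEquiv.one_def]
      calc γ = (AffineEquiv.constVAdd K V lam * AffineEquiv.constVAdd K V (-lam)) * γ := by
              rw [hmul, one_mul]
        _ = AffineEquiv.constVAdd K V lam * (AffineEquiv.constVAdd K V (-lam) * γ) :=
              mul_assoc _ _ _
        _ = AffineEquiv.constVAdd K V lam := by rw [this, mul_one]
    exact hnt ⟨lam, this⟩
  · -- no quasi-fixed point → torsion-free
    intro h γ m hm hpow
    by_contra hne
    set g : V ≃ᵃ[K] V := (γ : V ≃ᵃ[K] V) with hgdef
    have hgm : g ^ m = 1 := by
      have := congrArg (Subtype.val) hpow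
      simpa [hgdef] using this
    by_cases hb : ∃ b : V, g = AffineEquiv.constVAdd K V b
    · obtain ⟨b, hb⟩ := hb
      have : AffineEquiv.constVAdd K V (m • b) = 1 := by
        rw [AffineEquiv.constVAdd_nsmul, ← hb, hgm]
      have hmb : m • b = 0 := by
        have := congrArg (fun f : V ≃ᵃ[K] V => f 0) this
        simpa [vadd_eq_add] using this
      have hb0 : b = 0 := by
        have : (m : K) • b = 0 := by rw [Nat.cast_smul_eq_nsmul]; exact hmb
        rcases smul_eq_zero.mp this with h1 | h1
        · exact absurd h1 (Nat.cast_ne_zero.mpr hm.ne')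
        · exact h1
      apply hne
      apply Subtype.ext
      rw [← hgdef, hb, hb0]
      simp [AffineEquiv.one_def]
    · -- construct fixed point by averaging
      set w : V := (m : K)⁻¹ • ∑ i ∈ Finset.range m, (g ^ i) 0 with hwdef
      have hmK : (m : K) ≠ 0 := Nat.cast_ne_zero.mpr hm.ne'
      have key : g w = w := by
        have hsum_shift : ∑ i ∈ Finset.range m, (g ^ (i + 1)) 0
            = ∑ i ∈ Finset.range m, (g ^ i) 0 := by
          have h1 : ∑ i ∈ Finset.range (m + 1), (g ^ i) 0
              = (∑ i ∈ Finset.range m, (g ^ (i + 1)) 0) + (g ^ 0) 0 :=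
            Finset.sum_range_succ' _ m
          have h2 : ∑ i ∈ Finset.range (m + 1), (g ^ i) 0
              = (∑ i ∈ Finset.range m, (g ^ i) 0) + (g ^ m) 0 :=
            Finset.sum_range_succ _ m
          have h3 : (g ^ m) 0 = 0 := by rw [hgm]; rfl
          have h4 : (g ^ 0) 0 = (0 : V) := rfl
          rw [h3] at h2; rw [h4] at h1
          rw [add_zero] at h1 h2
          rw [← h1, h2]
        have hlinsum : ∑ i ∈ Finset.range m, g.linear ((g ^ i) 0)
            = (∑ i ∈ Finset.range m, (g ^ i) 0) - m • g 0 := by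
          have step : ∀ i, g.linear ((g ^ i) 0) = (g ^ (i + 1)) 0 - g 0 := by
            intro i
            have := affeq_apply K V g ((g ^ i) 0)
            have hgi : g ((g ^ i) 0) = (g ^ (i + 1)) 0 := by
              rw [pow_succ']
              simp [AffineEquiv.coe_mul]
            rw [hgi] at this
            rw [eq_sub_iff_add_eq, ← this]
          calc ∑ i ∈ Finset.range m, g.linear ((g ^ i) 0)
              = ∑ i ∈ Finset.range m, ((g ^ (i + 1)) 0 - g 0) := by
                exact Finset.sum_congr rfl fun i _ => step i
            _ = (∑ i ∈ Finset.range m, (g ^ (i + 1)) 0) - m • g 0 := by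
                rw [Finset.sum_sub_distrib, Finset.sum_const, Finset.card_range]
            _ = (∑ i ∈ Finset.range m, (g ^ i) 0) - m • g 0 := by rw [hsum_shift]
        calc g w = g.linear w + g 0 := affeq_apply K V g w
          _ = (m : K)⁻¹ • (∑ i ∈ Finset.range m, g.linear ((g ^ i) 0)) + g 0 := by
              rw [hwdef, map_smul, map_sum]
          _ = (m : K)⁻¹ • ((∑ i ∈ Finset.range m, (g ^ i) 0) - m • g 0) + g 0 := by
              rw [hlinsum]
          _ = w - (m : K)⁻¹ • ((m : K) • g 0) + g 0 := by
              rw [smul_sub, hwdef, Nat.cast_smul_eq_nsmul]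
          _ = w := by
              rw [smul_smul, inv_mul_cancel₀ hmK, one_smul]
              abel
      have := h g γ.2 hb w
      apply this
      rw [key, sub_self]
      exact Λ'.zero_mem
end

section
/- Let (Γ, Λ) be a crystallographic group, K a field of characteristic zero, and V_K := Λ ⊗_ℤ K with Γ acting via Ad ⊗ id. For every additive map φ : Λ → V_K which is Γ-equivariant, i.e. φ(γλγ⁻¹) = γ·φ(λ) for all γ ∈ Γ and λ ∈ Λ, there exists a 1-cocycle u : Γ → V_K whose restriction to Λ equals φ. -/
/-- Let `(Γ, Λ)` be a crystallographic group, `K` a field of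
characteristic zero, and `V_K := Λ ⊗_ℤ K` (identified with `Kⁿ`, with `Λ` presented as
`ℤⁿ` via `i`), on which `Γ` acts via `Ad ⊗ id` through `ρ`.  For every additive map
`φ : Λ → V_K` which is `Γ`-equivariant (`φ (γ λ γ⁻¹) = γ • φ λ`), there exists a
1-cocycle `u : Γ → V_K` whose restriction to `Λ` equals `φ`. -/
theorem equivariant_hom_extends_to_cocycle
    (K : Type*) [Field K] [CharZero K] (n : ℕ)
    (Γ : Type*) [Group Γ] (Λ : Subgroup Γ)
    (i : (Fin n → ℤ) → Γ)
    (hadd : ∀ l m : Fin n → ℤ, i (l + m) = i l * i m)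
    (hinj : Function.Injective i)
    (hrange : ∀ γ : Γ, γ ∈ Λ ↔ ∃ l : Fin n → ℤ, i l = γ)
    (hnormal : Λ.Normal) (hfi : Λ.FiniteIndex)
    (hker : ∀ γ : Γ, (∀ l : Fin n → ℤ, γ * i l * γ⁻¹ = i l) → γ ∈ Λ)
    (ρ : Γ →* ((Fin n → K) ≃ₗ[K] (Fin n → K)))
    (hρ : ∀ (γ : Γ) (l m : Fin n → ℤ), γ * i l * γ⁻¹ = i m →
      ρ γ (fun j => (l j : K)) = fun j => (m j : K))
    (φ : (Fin n → ℤ) → (Fin n → K))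
    (hφadd : ∀ l m : Fin n → ℤ, φ (l + m) = φ l + φ m)
    (hφequiv : ∀ (γ : Γ) (l m : Fin n → ℤ), γ * i l * γ⁻¹ = i m → ρ γ (φ l) = φ m) :
    ∃ u : Γ → (Fin n → K),
      (∀ γ δ : Γ, u (γ * δ) = u γ + ρ γ (u δ)) ∧
      (∀ l : Fin n → ℤ, u (i l) = φ l) := by
  classical
  haveI := hfi
  haveI : Fintype (Γ ⧸ Λ) := Fintype.ofFinite _
  set N : ℕ := Fintype.card (Γ ⧸ Λ) with hNdef
  have hN : (N : K) ≠ 0 := Nat.cast_ne_zero.mpr Fintype.card_ne_zero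
  -- ρ of a lattice element fixes all φ-values
  have hρΛ : ∀ (m l : Fin n → ℤ), ρ (i m) (φ l) = φ l := by
    intro m l
    refine hφequiv (i m) l l ?_
    have : i m * i l = i l * i m := by rw [← hadd, ← hadd, add_comm]
    rw [this]; group
  -- key existence: for γ, c, the element (γ•c).out⁻¹ * (γ * c.out) lies in Λ
  have key : ∀ (γ : Γ) (c : Γ ⧸ Λ), ∃ l, i l = (γ • c).out⁻¹ * (γ * c.out) := by
    intro γ c
    refine (hrange _).mp ?_
    have h1 : (QuotientGroup.mk ((γ • c).out) : Γ ⧸ Λ) = γ • c := QuotientGroup.out_eq' _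
    have h2 : (QuotientGroup.mk (γ * c.out) : Γ ⧸ Λ) = γ • c := by
      rw [← smul_eq_mul, ← MulAction.Quotient.smul_mk, QuotientGroup.out_eq']
    exact QuotientGroup.eq.mp (h1.trans h2.symm)
  set w : Γ → (Γ ⧸ Λ) → (Fin n → ℤ) := fun γ c => (key γ c).choose with hwdef
  have hw : ∀ (γ : Γ) (c : Γ ⧸ Λ), i (w γ c) = (γ • c).out⁻¹ * (γ * c.out) :=
    fun γ c => (key γ c).choose_spec
  set S : Γ → (Fin n → K) := fun γ => ∑ c : Γ ⧸ Λ, ρ ((γ • c).out) (φ (w γ c)) with hSdef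
  refine ⟨fun γ => (N : K)⁻¹ • S γ, ?_, ?_⟩
  · intro γ δ
    have claim : ∀ c : Γ ⧸ Λ,
        ρ (((γ * δ) • c).out) (φ (w (γ * δ) c))
          = ρ ((γ • (δ • c)).out) (φ (w γ (δ • c)))
            + ρ γ (ρ ((δ • c).out) (φ (w δ c))) := by
      intro c
      have hsm : (γ * δ) • c = γ • (δ • c) := mul_smul γ δ c
      have hws : w (γ * δ) c = w γ (δ • c) + w δ c := by
        apply hinj
        rw [hadd, hw, hw, hw, hsm]
        group
      have hz : γ * (δ • c).out = (γ • (δ • c)).out * i (w γ (δ • c)) := by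
        rw [hw]; group
      have h2 : ρ γ (ρ ((δ • c).out) (φ (w δ c)))
          = ρ ((γ • (δ • c)).out) (φ (w δ c)) := by
        have := congrArg ρ hz
        rw [map_mul, map_mul] at this
        calc ρ γ (ρ ((δ • c).out) (φ (w δ c)))
            = (ρ γ * ρ ((δ • c).out)) (φ (w δ c)) := rfl
          _ = (ρ ((γ • (δ • c)).out) * ρ (i (w γ (δ • c)))) (φ (w δ c)) := by rw [← this]
          _ = ρ ((γ • (δ • c)).out) (ρ (i (w γ (δ • c))) (φ (w δ c))) := rfl
          _ = ρ ((γ • (δ • c)).out) (φ (w δ c)) := by rw [hρΛ]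
      rw [hsm, hws, hφadd, map_add, h2]
    have hSsplit : S (γ * δ) = S γ + ρ γ (S δ) := by
      rw [hSdef]
      simp only [claim]
      rw [Finset.sum_add_distrib]
      congr 1
      · exact Fintype.sum_bijective (fun c => δ • c) (MulAction.bijective δ)
          _ _ (fun c => rfl)
      · rw [map_sum]
    show (N : K)⁻¹ • S (γ * δ) = (N : K)⁻¹ • S γ + ρ γ ((N : K)⁻¹ • S δ)
    rw [hSsplit, smul_add, map_smul]
  · intro l
    have hfix : ∀ c : Γ ⧸ Λ, (i l) • c = c := by
      intro c
      have h1 : (i l) • c = QuotientGroup.mk (i l * c.out) := by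
        conv_lhs => rw [← QuotientGroup.out_eq' c]
        rfl
      rw [h1]
      conv_rhs => rw [← QuotientGroup.out_eq' c]
      refine QuotientGroup.eq.mpr ?_
      have hl : i l ∈ Λ := (hrange _).mpr ⟨l, rfl⟩
      have heq : (i l * c.out)⁻¹ * c.out = c.out⁻¹ * (i l)⁻¹ * (c.out⁻¹)⁻¹ := by group
      rw [heq]
      exact hnormal.conj_mem _ (Λ.inv_mem hl) _
    have hterm : ∀ c : Γ ⧸ Λ, ρ (((i l) • c).out) (φ (w (i l) c)) = φ l := by
      intro c
      rw [hfix c]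
      refine hφequiv c.out _ l ?_
      have h1 : i (w (i l) c) = ((i l) • c).out⁻¹ * (i l * c.out) := hw (i l) c
      rw [hfix c] at h1
      rw [h1]; group
    have : S (i l) = N • φ l := by
      rw [hSdef]
      simp only [hterm]
      rw [Finset.sum_const, Finset.card_univ]
    show (N : K)⁻¹ • S (i l) = φ l
    rw [this, ← Nat.cast_smul_eq_nsmul K, inv_smul_smul₀ hN]
end
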